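/- arXiv:1810.00920 — 2 statements merged into one kernel-verified Lean document; each statement's English description precedes it below -/
import Mathlib

section
/- Let a, b be positive integers with a + b ≤ n - 1. If P, Q ⊆ [2,n] are nonempty with |P| ≤ a, |Q| ≤ b, and P, Q strongly intersect in their largest element (i.e., there exists j with P ∩ Q = {j} and P ∪ Q = [2,j]), then L([2,n],P,a) and L([2,n],Q,b) form a maximal pair of cross-intersecting families: no proper cross-intersecting superfamilies exist. -/
/-!
Call a set `A` of the right size *bad* if it lies outside `L(X, P, a)`. Let `i` be the least element
of `P \ A`; badness means every element of `A` below `i` lies in `P`. The set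
`B₀ = {q ∈ Q : q < i} ∪ {i}` then misses `A`: an element of `A ∩ Q` below `i` would lie in
`P ∩ Q = {j}`, yet `i ≤ j`. It has at most `|Q| ≤ b` elements because `j ∉ B₀` unless `i = j`, and
`a + b ≤ |X|` leaves room to extend it to a `b`-set `B` disjoint from `A`. Finally `B ≼ Q`, since
`B` contains every element of `Q` below `i`, and either `i = j` (so `Q ⊆ B`) or `i ∈ B \ Q`.
So every bad `a`-set is disjoint from a member of `L(X, Q, b)`, and symmetrically, which is
maximality.
-/

open Finset

/-- The lexicographic family `L(X,S,a) = {A ∈ C(X,a) : A ≼ S ∩ X}` in the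
lexicographic/containment order (`A ≼ B` iff `A ⊇ B` or `min (A \ B) < min (B \ A)`). -/
def lexFam (X S : Finset ℕ) (a : ℕ) : Finset (Finset ℕ) :=
  (X.powersetCard a).filter
    (fun A => (S ∩ X) ⊆ A ∨ (A \ (S ∩ X)).min < ((S ∩ X) \ A).min)

namespace Finset

variable {α : Type*} [LinearOrder α]

/-- The order `A ≼ S` of the lexicographic families `L(X, S, a)`. -/
def LexPrec (A S : Finset α) : Prop :=
  S ⊆ A ∨ (A \ S).min < (S \ A).min

theorem exists_mem_not_mem_forall_lt_mem_of_not_lexPrec {A S : Finset α}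
    (h : ¬ LexPrec A S) : ∃ i ∈ S, i ∉ A ∧ ∀ x ∈ A, x < i → x ∈ S := by
  rw [LexPrec, not_or, not_lt] at h
  obtain ⟨hSA, hmin⟩ := h
  have hne : (S \ A).Nonempty := sdiff_nonempty.mpr hSA
  obtain ⟨hiS, hiA⟩ := mem_sdiff.mp (min'_mem _ hne)
  refine ⟨_, hiS, hiA, fun x hxA hxi => ?_⟩
  by_contra hxS
  have hle : (S \ A).min ≤ x := hmin.trans (min_le (mem_sdiff.mpr ⟨hxA, hxS⟩))
  rw [← coe_min' hne, WithTop.coe_le_coe] at hle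
  exact absurd hxi (not_lt.mpr hle)

theorem lexPrec_of_mem_of_forall_lt_mem {B S : Finset α} {i : α} (hiB : i ∈ B) (hiS : i ∉ S)
    (hlt : ∀ s ∈ S, s < i → s ∈ B) : LexPrec B S := by
  right
  refine (min_le (mem_sdiff.mpr ⟨hiB, hiS⟩)).trans_lt ?_
  rcases (S \ B).eq_empty_or_nonempty with hempty | hne
  · rw [hempty, min_empty]
    exact WithTop.coe_lt_top i
  · rw [← coe_min' hne, WithTop.coe_lt_coe]
    obtain ⟨hsS, hsB⟩ := mem_sdiff.mp (min'_mem _ hne)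
    refine lt_of_le_of_ne (not_lt.mp fun hs => hsB (hlt _ hsS hs)) ?_
    rintro rfl
    exact hsB hiB

theorem lexPrec_of_forall_lt_mem_of_inter_eq_singleton {B P Q : Finset α} {i j : α}
    (hiP : i ∈ P) (hiB : i ∈ B) (hlt : ∀ q ∈ Q, q < i → q ∈ B) (hPQ : P ∩ Q = {j})
    (hQj : ∀ q ∈ Q, q ≤ j) : LexPrec B Q := by
  by_cases hiQ : i ∈ Q
  · have hij : i = j := mem_singleton.mp (hPQ ▸ mem_inter.mpr ⟨hiP, hiQ⟩)
    refine Or.inl fun q hq => ?_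
    rcases (hQj q hq).lt_or_eq with hqj | rfl
    · exact hlt q hq (hij ▸ hqj)
    · exact hij ▸ hiB
  · exact lexPrec_of_mem_of_forall_lt_mem hiB hiQ hlt

end Finset

theorem mem_lexFam {X S A : Finset ℕ} {a : ℕ} (hS : S ⊆ X) :
    A ∈ lexFam X S a ↔ A ∈ X.powersetCard a ∧ LexPrec A S := by
  rw [lexFam, mem_filter, inter_eq_left.mpr hS, LexPrec]

theorem exists_disjoint_mem_lexFam_of_not_mem_lexFam {X P Q A : Finset ℕ} {a b j : ℕ}
    (hP : P ⊆ X) (hQ : Q ⊆ X) (hQb : Q.card ≤ b) (hX : a + b ≤ X.card)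
    (hPQ : P ∩ Q = {j}) (hj : ∀ x ∈ P ∪ Q, x ≤ j)
    (hA : A ∈ X.powersetCard a) (hAP : A ∉ lexFam X P a) :
    ∃ B ∈ lexFam X Q b, Disjoint A B := by
  obtain ⟨hAX, hAcard⟩ := mem_powersetCard.mp hA
  have hAP' : ¬ LexPrec A P := fun h => hAP ((mem_lexFam hP).mpr ⟨hA, h⟩)
  obtain ⟨i, hiP, hiA, hbelow⟩ := exists_mem_not_mem_forall_lt_mem_of_not_lexPrec hAP'
  have hjQ : j ∈ Q := (mem_inter.mp (hPQ ▸ mem_singleton_self j)).2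
  have hij : i ≤ j := hj i (mem_union_left _ hiP)
  set B₀ := insert i (Q.filter (· < i)) with hB₀
  have hB₀A : Disjoint A B₀ := by
    refine disjoint_right.mpr fun x hx hxA => ?_
    rcases mem_insert.mp hx with rfl | hx
    · exact hiA hxA
    · obtain ⟨hxQ, hxi⟩ := mem_filter.mp hx
      have : x = j := mem_singleton.mp (hPQ ▸ mem_inter.mpr ⟨hbelow x hxA hxi, hxQ⟩)
      omega
  have hB₀card : B₀.card ≤ b := by
    rw [hB₀]
    have hfilter : (Q.filter (· < i)).card < Q.card :=
      card_lt_card (filter_ssubset.mpr ⟨j, hjQ, not_lt.mpr hij⟩)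
    have := card_insert_le i (Q.filter (· < i))
    omega
  have hB₀X : B₀ ⊆ X \ A := fun x hx =>
    mem_sdiff.mpr ⟨(insert_subset (hP hiP) ((filter_subset _ _).trans hQ)) hx,
      disjoint_right.mp hB₀A hx⟩
  have hroom : b ≤ (X \ A).card := by
    rw [card_sdiff_of_subset hAX]
    omega
  obtain ⟨B, hB₀B, hBXA, hBcard⟩ := exists_subsuperset_card_eq hB₀X hB₀card hroom
  have hBX : B ⊆ X := hBXA.trans sdiff_subset
  have hiB : i ∈ B := hB₀B (mem_insert_self _ _)
  have hlt : ∀ q ∈ Q, q < i → q ∈ B := fun q hq hqi =>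
    hB₀B (mem_insert_of_mem (mem_filter.mpr ⟨hq, hqi⟩))
  have hQB : LexPrec B Q := lexPrec_of_forall_lt_mem_of_inter_eq_singleton hiP hiB hlt hPQ
    fun q hq => hj q (mem_union_right _ hq)
  refine ⟨B, (mem_lexFam hQ).mpr ⟨mem_powersetCard.mpr ⟨hBX, hBcard⟩, hQB⟩, ?_⟩
  exact disjoint_of_subset_right hBXA sdiff_disjoint.symm

theorem eq_of_cross_intersecting_of_forall_not_mem_exists_disjoint {α : Type*} [DecidableEq α]
    {U L M A' B' : Finset (Finset α)} (hA'U : A' ⊆ U) (hLA' : L ⊆ A') (hMB' : M ⊆ B')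
    (hcross : ∀ A ∈ A', ∀ B ∈ B', (A ∩ B).Nonempty)
    (hdisj : ∀ A ∈ U, A ∉ L → ∃ B ∈ M, Disjoint A B) : A' = L := by
  refine Subset.antisymm (fun A hA => ?_) hLA'
  by_contra hAL
  obtain ⟨B, hBM, hAB⟩ := hdisj A (hA'U hA) hAL
  exact (disjoint_iff_inter_eq_empty.mp hAB ▸ hcross A hA B (hMB' hBM)).ne_empty rfl

theorem lex_maximal_cross_intersecting_general (n a b : ℕ)
    (hab : a + b ≤ n - 1)
    (P Q : Finset ℕ) (hP : P ⊆ Finset.Icc 2 n) (hQ : Q ⊆ Finset.Icc 2 n)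
    (hPa : P.card ≤ a) (hQb : Q.card ≤ b)
    (hstrong : ∃ j : ℕ, P ∩ Q = {j} ∧ P ∪ Q = Finset.Icc 2 j) :
    ∀ A' B' : Finset (Finset ℕ),
      A' ⊆ (Finset.Icc 2 n).powersetCard a → B' ⊆ (Finset.Icc 2 n).powersetCard b →
      lexFam (Finset.Icc 2 n) P a ⊆ A' → lexFam (Finset.Icc 2 n) Q b ⊆ B' →
      (∀ A ∈ A', ∀ B ∈ B', (A ∩ B).Nonempty) →
      A' = lexFam (Finset.Icc 2 n) P a ∧ B' = lexFam (Finset.Icc 2 n) Q b := by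
  intro A' B' hA' hB' hLA' hLB' hcross
  obtain ⟨j, hPQ, hU⟩ := hstrong
  have hj : ∀ x ∈ P ∪ Q, x ≤ j := fun x hx => (mem_Icc.mp (hU ▸ hx)).2
  have hX : a + b ≤ (Icc 2 n).card := by rw [Nat.card_Icc]; omega
  refine ⟨eq_of_cross_intersecting_of_forall_not_mem_exists_disjoint hA' hLA' hLB' hcross
      fun A hA hAL => exists_disjoint_mem_lexFam_of_not_mem_lexFam hP hQ hQb hX hPQ hj hA hAL,
    eq_of_cross_intersecting_of_forall_not_mem_exists_disjoint hB' hLB' hLA'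
      (fun B hB A hA => inter_comm A B ▸ hcross A hA B hB)
      fun B hB hBL => exists_disjoint_mem_lexFam_of_not_mem_lexFam hQ hP hPa (by omega)
        (inter_comm P Q ▸ hPQ) (union_comm P Q ▸ hj) hB hBL⟩

/-- If nonempty `P, Q ⊆ [2,n]` with `|P| ≤ a`, `|Q| ≤ b`, `a + b ≤ n - 1`, strongly intersect
in their largest element (`P ∩ Q = {j}`, `P ∪ Q = [2,j]`), then `L([2,n],P,a)` and
`L([2,n],Q,b)` form a maximal pair of cross-intersecting families. -/
theorem lex_maximal_cross_intersecting (n a b : ℕ) (ha : 0 < a) (hb : 0 < b)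
    (hab : a + b ≤ n - 1)
    (P Q : Finset ℕ) (hP : P ⊆ Finset.Icc 2 n) (hQ : Q ⊆ Finset.Icc 2 n)
    (hPne : P.Nonempty) (hQne : Q.Nonempty) (hPa : P.card ≤ a) (hQb : Q.card ≤ b)
    (hstrong : ∃ j : ℕ, P ∩ Q = {j} ∧ P ∪ Q = Finset.Icc 2 j) :
    ∀ A' B' : Finset (Finset ℕ),
      A' ⊆ (Finset.Icc 2 n).powersetCard a → B' ⊆ (Finset.Icc 2 n).powersetCard b →
      lexFam (Finset.Icc 2 n) P a ⊆ A' → lexFam (Finset.Icc 2 n) Q b ⊆ B' →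
      (∀ A ∈ A', ∀ B ∈ B', (A ∩ B).Nonempty) →
      A' = lexFam (Finset.Icc 2 n) P a ∧ B' = lexFam (Finset.Icc 2 n) Q b :=
  lex_maximal_cross_intersecting_general n a b hab P Q hP hQ hPa hQb hstrong
end

section
/- Let a, b > 0, n > a + b, t = b + 1 - a, and let A ⊆ C([n],a), B ⊆ C([n],b) be cross-intersecting. If C(n-j, b-j) ≤ |B| ≤ C(n-t, a-1) for some integer j ∈ [t, b], then |A| + |B| ≤ C(n,a) - C(n-j,a) + C(n-j, b-j). -/
/-!
Replace `B` by the family `Bᶜˢ` of complements, a family of `r = n - b`-sets. No set of `A` lies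
in its `(r - a)`-fold shadow, so `|A| ≤ C(n, a) - |∂^(r-a) Bᶜˢ|`, and by Kruskal–Katona we may
replace `Bᶜˢ` by the colex initial segment `𝒞` of the same size. The two bounds on `|B|` say that
`𝒞` contains every `r`-subset of `[0, n - j)` and consists of subsets of `[0, N)` with
`N ≤ r + a - 1`. Removing the points of `[n - j, N)` one at a time shows
`|𝒞| - |∂^(r-a) 𝒞| ≤ C(n - j, r) - C(n - j, a)`: the sets through a removed point form, after
deleting it, a family of `(r - 1)`-sets on at most `r + a - 2` points, and on so small a ground
set double counting shows that iterated shadows do not shrink.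
-/

open Finset
open scoped FinsetFamily

theorem Fin.isLowerSet_filter_val_lt (n m : ℕ) :
    IsLowerSet (({i : Fin n | (i : ℕ) < m} : Finset (Fin n)) : Set (Fin n)) := by
  intro i j hji hi
  simpa using lt_of_le_of_lt (Fin.le_iff_val_le_val.1 hji) (by simpa using hi)

theorem Fin.map_valEmbedding_add_one_univ (n : ℕ) :
    (univ : Finset (Fin n)).map (Fin.valEmbedding.trans (addRightEmbedding 1)) = Icc 1 n := by
  ext x
  simp only [mem_Icc, mem_map, mem_univ, true_and]
  refine ⟨?_, fun hx => ⟨⟨x - 1, by omega⟩, by simp; omega⟩⟩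
  rintro ⟨i, rfl⟩
  simp

namespace Finset

section Shadow

variable {α : Type*} [DecidableEq α] {𝒜 : Finset (Finset α)} {G : Finset α} {ρ d : ℕ}

theorem card_le_card_shadow_iterate (h𝒜 : 𝒜 ⊆ G.powersetCard ρ) (hG : #G + d ≤ 2 * ρ) :
    #𝒜 ≤ #(∂^[d] 𝒜) := by
  obtain rfl | ⟨S₀, hS₀⟩ := 𝒜.eq_empty_or_nonempty
  · simp
  obtain ⟨hS₀G, hS₀c⟩ := mem_powersetCard.1 (h𝒜 hS₀)
  have hdρ : d ≤ ρ := by have := card_le_card hS₀G; omega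
  have hdouble : #𝒜 * ρ.choose d ≤ #(∂^[d] 𝒜) * (#G - (ρ - d)).choose d := by
    refine card_mul_le_card_mul' (· ⊆ ·) (fun S hS => ?_) (fun T hT => ?_)
    · obtain ⟨-, hSc⟩ := mem_powersetCard.1 (h𝒜 hS)
      rw [← Nat.choose_symm hdρ, ← hSc, ← card_powersetCard]
      refine card_le_card fun T hT => ?_
      obtain ⟨hTS, hTc⟩ := mem_powersetCard.1 hT
      exact (mem_bipartiteBelow _).2
        ⟨mem_shadow_iterate_iff_exists_mem_card_add.2 ⟨S, hS, hTS, by omega⟩, hTS⟩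
    · obtain ⟨S, hS, hTS, hSc⟩ := mem_shadow_iterate_iff_exists_mem_card_add.1 hT
      obtain ⟨hSG, hSc'⟩ := mem_powersetCard.1 (h𝒜 hS)
      have hTc : ρ - d = #T := by omega
      rw [hTc, ← card_sdiff_of_subset (hTS.trans hSG), ← card_powersetCard]
      refine card_le_card_of_injOn (· \ T) (fun S' hS' => ?_) (fun S₁ h₁ S₂ h₂ h => ?_)
      · obtain ⟨hS'𝒜, hTS'⟩ := (mem_bipartiteAbove _).1 hS'
        obtain ⟨hS'G, hS'c⟩ := mem_powersetCard.1 (h𝒜 hS'𝒜)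
        exact mem_powersetCard.2 ⟨sdiff_subset_sdiff hS'G le_rfl,
          by rw [card_sdiff_of_subset hTS']; omega⟩
      · rw [← sdiff_union_of_subset ((mem_bipartiteAbove _).1 h₁).2,
          ← sdiff_union_of_subset ((mem_bipartiteAbove _).1 h₂).2]
        exact congrArg (· ∪ T) h
  have hchoose : (#G - (ρ - d)).choose d ≤ ρ.choose d := Nat.choose_le_choose _ (by omega)
  exact Nat.le_of_mul_le_mul_right (hdouble.trans (Nat.mul_le_mul_left _ hchoose))
    (Nat.choose_pos hdρ)

theorem shadow_iterate_nonMemberSubfamily_subset (x : α) (d : ℕ) :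
    ∂^[d] (𝒜.nonMemberSubfamily x) ⊆ (∂^[d] 𝒜).nonMemberSubfamily x := by
  intro T hT
  obtain ⟨S, hS, hTS, hc⟩ := mem_shadow_iterate_iff_exists_mem_card_add.1 hT
  obtain ⟨hS𝒜, hxS⟩ := mem_nonMemberSubfamily.1 hS
  exact mem_nonMemberSubfamily.2
    ⟨mem_shadow_iterate_iff_exists_mem_card_add.2 ⟨S, hS𝒜, hTS, hc⟩,
      fun hxT => hxS (hTS hxT)⟩

theorem shadow_iterate_memberSubfamily_subset (x : α) (d : ℕ) :
    ∂^[d] (𝒜.memberSubfamily x) ⊆ (∂^[d] 𝒜).memberSubfamily x := by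
  intro T hT
  obtain ⟨S, hS, hTS, hc⟩ := mem_shadow_iterate_iff_exists_mem_card_add.1 hT
  obtain ⟨hS𝒜, hxS⟩ := mem_memberSubfamily.1 hS
  have hxT : x ∉ T := fun hxT => hxS (hTS hxT)
  refine mem_memberSubfamily.2 ⟨mem_shadow_iterate_iff_exists_mem_card_add.2
    ⟨insert x S, hS𝒜, insert_subset_insert x hTS, ?_⟩, hxT⟩
  rw [card_insert_of_notMem hxS, card_insert_of_notMem hxT, hc]
  omega

theorem card_shadow_iterate_memberSubfamily_add_le (x : α) (d : ℕ) :
    #(∂^[d] (𝒜.memberSubfamily x)) + #(∂^[d] (𝒜.nonMemberSubfamily x)) ≤ #(∂^[d] 𝒜) := by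
  rw [← card_memberSubfamily_add_card_nonMemberSubfamily x (∂^[d] 𝒜)]
  exact add_le_add (card_le_card (shadow_iterate_memberSubfamily_subset x d))
    (card_le_card (shadow_iterate_nonMemberSubfamily_subset x d))

theorem nonMemberSubfamily_subset_powersetCard_erase (x : α) (h𝒜 : 𝒜 ⊆ G.powersetCard ρ) :
    𝒜.nonMemberSubfamily x ⊆ (G.erase x).powersetCard ρ := by
  intro S hS
  obtain ⟨hS𝒜, hxS⟩ := mem_nonMemberSubfamily.1 hS
  obtain ⟨hSG, hSc⟩ := mem_powersetCard.1 (h𝒜 hS𝒜)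
  exact mem_powersetCard.2 ⟨subset_erase.2 ⟨hSG, hxS⟩, hSc⟩

theorem memberSubfamily_subset_powersetCard_erase (x : α) (h𝒜 : 𝒜 ⊆ G.powersetCard ρ) :
    𝒜.memberSubfamily x ⊆ (G.erase x).powersetCard (ρ - 1) := by
  intro S hS
  obtain ⟨hS𝒜, hxS⟩ := mem_memberSubfamily.1 hS
  obtain ⟨hSG, hSc⟩ := mem_powersetCard.1 (h𝒜 hS𝒜)
  rw [card_insert_of_notMem hxS] at hSc
  exact mem_powersetCard.2 ⟨subset_erase.2 ⟨(subset_insert x S).trans hSG, hxS⟩, by omega⟩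

theorem choose_le_card_shadow_iterate_powersetCard {K : Finset α} {r a : ℕ} (har : a ≤ r)
    (hrK : r ≤ #K) : (#K).choose a ≤ #(∂^[r - a] (K.powersetCard r)) := by
  rw [← card_powersetCard]
  refine card_le_card fun T hT => ?_
  obtain ⟨hTK, hTc⟩ := mem_powersetCard.1 hT
  obtain ⟨S, hTS, hSK, hSc⟩ := exists_subsuperset_card_eq hTK (by omega) hrK
  exact mem_shadow_iterate_iff_exists_mem_card_add.2
    ⟨S, mem_powersetCard.2 ⟨hSK, hSc⟩, hTS, by omega⟩

theorem card_add_choose_le_card_shadow_iterate_add_choose {K G : Finset α}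
    {ℐ : Finset (Finset α)} {r a : ℕ} (hKG : K ⊆ G) (hKℐ : K.powersetCard r ⊆ ℐ)
    (hℐG : ℐ ⊆ G.powersetCard r) (har : a ≤ r) (hrK : r ≤ #K) (hG : #G + 1 ≤ r + a) :
    #ℐ + (#K).choose a ≤ #(∂^[r - a] ℐ) + (#K).choose r := by
  induction G using Finset.strongInduction generalizing ℐ with
  | H G ih =>
  by_cases hGK : G ⊆ K
  · obtain rfl : G = K := hGK.antisymm hKG
    obtain rfl : ℐ = G.powersetCard r := hℐG.antisymm hKℐ
    have := choose_le_card_shadow_iterate_powersetCard har hrK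
    rw [card_powersetCard]
    omega
  obtain ⟨x, hxG, hxK⟩ := not_subset.1 hGK
  have hxG' : #(G.erase x) + 1 = #G := card_erase_add_one hxG
  have hK' : #K ≤ #(G.erase x) := card_le_card (subset_erase.2 ⟨hKG, hxK⟩)
  have hdeleted := ih (G.erase x) (erase_ssubset hxG) (subset_erase.2 ⟨hKG, hxK⟩)
    (ℐ := ℐ.nonMemberSubfamily x)
    (fun S hS => mem_nonMemberSubfamily.2
      ⟨hKℐ hS, fun hxS => hxK ((mem_powersetCard.1 hS).1 hxS)⟩)
    (nonMemberSubfamily_subset_powersetCard_erase x hℐG) (by omega)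
  have hlink := card_le_card_shadow_iterate (d := r - a)
    (memberSubfamily_subset_powersetCard_erase x hℐG) (by omega)
  have hsplit := card_shadow_iterate_memberSubfamily_add_le (𝒜 := ℐ) x (r - a)
  have := card_memberSubfamily_add_card_nonMemberSubfamily x ℐ
  omega

end Shadow

namespace Colex

variable {α : Type*} [LinearOrder α] {𝒜 𝒞 : Finset (Finset α)} {r : ℕ}

theorem IsInitSeg.subset_of_card_le (h𝒜 : IsInitSeg 𝒜 r) (h𝒞 : IsInitSeg 𝒞 r)
    (hcard : #𝒜 ≤ #𝒞) : 𝒜 ⊆ 𝒞 := by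
  obtain h | h := h𝒜.total h𝒞
  · exact h
  · exact (eq_of_subset_of_card_le h hcard).ge

theorem isInitSeg_powersetCard {K : Finset α} (hK : IsLowerSet (K : Set α)) (r : ℕ) :
    IsInitSeg (K.powersetCard r) r := by
  refine ⟨Set.sized_powersetCard K r, fun S T hS ⟨hTS, hTc⟩ => mem_powersetCard.2 ⟨?_, hTc⟩⟩
  obtain ⟨y, hyS, hyT, hy⟩ := toColex_lt_toColex_iff_exists_forall_lt.1 hTS
  have hSK := (mem_powersetCard.1 hS).1
  intro z hzT
  by_cases hzS : z ∈ S
  · exact hSK hzS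
  · exact hK (hy z hzT hzS).le (hSK hyS)

theorem exists_isInitSeg_card_eq [Fintype α] {m : ℕ} (hm : m ≤ (Fintype.card α).choose r) :
    ∃ 𝒞 : Finset (Finset α), IsInitSeg 𝒞 r ∧ #𝒞 = m := by
  induction m with
  | zero => exact ⟨∅, isInitSeg_empty, card_empty⟩
  | succ m ih =>
    obtain ⟨𝒞, h𝒞, rfl⟩ := ih (by omega)
    have hrest : (univ.powersetCard r \ 𝒞).Nonempty := by
      rw [← card_pos, card_sdiff_of_subset h𝒞.1.subset_powersetCard_univ, card_powersetCard,
        card_univ]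
      omega
    obtain ⟨S, hS, hSmin⟩ := exists_min_image _ toColex hrest
    obtain ⟨hSr, hS𝒞⟩ := mem_sdiff.1 hS
    refine ⟨insert S 𝒞, ⟨?_, fun T U hT ⟨hUT, hUc⟩ => ?_⟩, card_insert_of_notMem hS𝒞⟩
    · rw [coe_insert, Set.insert_eq, Set.sized_union, Set.sized_singleton]
      exact ⟨(mem_powersetCard.1 hSr).2, h𝒞.1⟩
    obtain rfl | hT := mem_insert.1 hT
    · by_contra hU
      exact (hSmin U (mem_sdiff.2 ⟨mem_powersetCard_univ.2 hUc,
        fun h => hU (mem_insert_of_mem h)⟩)).not_gt hUT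
    · exact mem_insert_of_mem (h𝒞.2 hT ⟨hUT, hUc⟩)

end Colex

open Finset.Colex

theorem card_add_choose_le_card_shadow_iterate_add_choose_of_choose_le_card {n r a k N : ℕ}
    {ℬ : Finset (Finset (Fin n))} (hℬ : (ℬ : Set (Finset (Fin n))).Sized r)
    (har : a ≤ r) (hrk : r ≤ k) (hkN : k ≤ N) (hN : N ≤ n) (hNa : N + 1 ≤ r + a)
    (hlow : k.choose r ≤ #ℬ) (hhigh : #ℬ ≤ N.choose r) :
    #ℬ + k.choose a ≤ #(∂^[r - a] ℬ) + k.choose r := by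
  obtain ⟨𝒞, h𝒞, h𝒞ℬ⟩ := exists_isInitSeg_card_eq (α := Fin n) (r := r) (m := #ℬ)
    (by simpa using hℬ.card_le)
  have hkk : #(∂^[r - a] 𝒞) ≤ #(∂^[r - a] ℬ) := iterated_kk hℬ h𝒞ℬ.le h𝒞
  set K : Finset (Fin n) := {i | (i : ℕ) < k}
  set G : Finset (Fin n) := {i | (i : ℕ) < N}
  have hK : #K = k := by rw [Fin.card_filter_val_lt]; omega
  have hG : #G = N := by rw [Fin.card_filter_val_lt]; omega
  have hK𝒞 : K.powersetCard r ⊆ 𝒞 :=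
    (isInitSeg_powersetCard (Fin.isLowerSet_filter_val_lt n k) r).subset_of_card_le h𝒞
      (by rwa [card_powersetCard, hK, h𝒞ℬ])
  have h𝒞G : 𝒞 ⊆ G.powersetCard r :=
    h𝒞.subset_of_card_le (isInitSeg_powersetCard (Fin.isLowerSet_filter_val_lt n N) r)
      (by rwa [card_powersetCard, hG, h𝒞ℬ])
  have hKG : K ⊆ G := fun i hi => by
    simp only [K, G, mem_filter, mem_univ, true_and] at hi ⊢
    omega
  have := card_add_choose_le_card_shadow_iterate_add_choose hKG hK𝒞 h𝒞G har (hK ▸ hrk)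
    (hG ▸ hNa)
  rw [hK, h𝒞ℬ] at this
  omega

theorem card_add_card_add_choose_le_of_crossIntersecting {n a b k N : ℕ}
    {A B : Finset (Finset (Fin n))} (hA : (A : Set (Finset (Fin n))).Sized a)
    (hB : (B : Set (Finset (Fin n))).Sized b) (hcross : ∀ S ∈ A, ∀ T ∈ B, (S ∩ T).Nonempty)
    (hab : a + b ≤ n) (hbk : n - b ≤ k) (hkN : k ≤ N) (hN : N ≤ n) (hNa : N + b + 1 ≤ n + a)
    (hlow : k.choose (n - b) ≤ #B) (hhigh : #B ≤ N.choose (n - b)) :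
    #A + #B + k.choose a ≤ n.choose a + k.choose (n - b) := by
  have hdisj : Disjoint A (∂^[n - b - a] Bᶜˢ) := disjoint_right.2 fun S hS hSA => by
    obtain ⟨T, hT, hST, -⟩ := mem_shadow_iterate_iff_exists_sdiff.1 hS
    obtain ⟨x, hx⟩ := hcross S hSA Tᶜ (mem_compls.1 hT)
    exact mem_compl.1 (mem_inter.1 hx).2 (hST (mem_inter.1 hx).1)
  have hBc : (Bᶜˢ : Set (Finset (Fin n))).Sized (n - b) := by simpa using hB.compls
  have hunion : #A + #(∂^[n - b - a] Bᶜˢ) ≤ n.choose a := by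
    rw [← card_union_of_disjoint hdisj]
    convert Set.Sized.card_le _
    · rw [Fintype.card_fin]
    rw [coe_union, Set.sized_union]
    refine ⟨hA, ?_⟩
    convert hBc.shadow_iterate
    omega
  have hcore := card_add_choose_le_card_shadow_iterate_add_choose_of_choose_le_card hBc (a := a)
    (by omega) hbk hkN hN (by omega) (by rwa [card_compls]) (by rwa [card_compls])
  rw [card_compls] at hcore
  omega

end Finset

theorem cross_intersecting_refined_bound_general (n a b j : ℕ)
    (hab : a + b < n)
    (hj1 : b + 1 - a ≤ j) (hj2 : j ≤ b)
    (A B : Finset (Finset ℕ))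
    (hA : A ⊆ (Finset.Icc 1 n).powersetCard a)
    (hB : B ⊆ (Finset.Icc 1 n).powersetCard b)
    (hcross : ∀ S ∈ A, ∀ T ∈ B, (S ∩ T).Nonempty)
    (hBlow : (n - j).choose (b - j) ≤ B.card)
    (hBhigh : B.card ≤ (n - (b + 1 - a)).choose (a - 1)) :
    (A.card : ℤ) + (B.card : ℤ)
      ≤ (n.choose a : ℤ) - ((n - j).choose a : ℤ) + ((n - j).choose (b - j) : ℤ) := by
  -- Kruskal–Katona is available over `Fin n` only, so relabel `[1, n]` as `Fin n`.
  rw [← Fin.map_valEmbedding_add_one_univ, powersetCard_map, subset_map_iff] at hA hB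
  obtain ⟨A, hA, rfl⟩ := hA
  obtain ⟨B, hB, rfl⟩ := hB
  rw [subset_powersetCard_univ_iff] at hA hB
  simp only [card_map] at hBlow hBhigh ⊢
  have hcross' : ∀ S ∈ A, ∀ T ∈ B, (S ∩ T).Nonempty := fun S hS T hT => by
    simpa [← map_inter] using hcross _ (mem_map_of_mem _ hS) _ (mem_map_of_mem _ hT)
  have hhigh : #B ≤ (n - (b + 1 - a)).choose (n - b) := by
    rcases le_or_gt a (b + 1) with h | h
    · rwa [← Nat.choose_symm_of_eq_add (by omega : n - (b + 1 - a) = a - 1 + (n - b))]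
    · rw [show n - (b + 1 - a) = n by omega, Nat.choose_symm (by omega)]
      simpa using hB.card_le
  have hsymm : (n - j).choose (b - j) = (n - j).choose (n - b) :=
    Nat.choose_symm_of_eq_add (by omega)
  have := card_add_card_add_choose_le_of_crossIntersecting hA hB hcross' (k := n - j)
    (by omega) (by omega) (by omega) (by omega) (by omega) (hsymm ▸ hBlow) hhigh
  rw [hsymm]
  omega

/-- Cross-intersecting families `A ⊆ C([n],a)`, `B ⊆ C([n],b)` with `n > a + b` and
`C(n-j,b-j) ≤ |B| ≤ C(n-t,a-1)` for some integer `j ∈ [t,b]`, where `t = b + 1 - a`,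
satisfy `|A| + |B| ≤ C(n,a) - C(n-j,a) + C(n-j,b-j)`. -/
theorem cross_intersecting_refined_bound (n a b j : ℕ) (ha : 0 < a) (hb : 0 < b)
    (hab : a + b < n)
    (hj1 : b + 1 - a ≤ j) (hj2 : j ≤ b)
    (A B : Finset (Finset ℕ))
    (hA : A ⊆ (Finset.Icc 1 n).powersetCard a)
    (hB : B ⊆ (Finset.Icc 1 n).powersetCard b)
    (hcross : ∀ S ∈ A, ∀ T ∈ B, (S ∩ T).Nonempty)
    (hBlow : (n - j).choose (b - j) ≤ B.card)
    (hBhigh : B.card ≤ (n - (b + 1 - a)).choose (a - 1)) :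
    (A.card : ℤ) + (B.card : ℤ)
      ≤ (n.choose a : ℤ) - ((n - j).choose a : ℤ) + ((n - j).choose (b - j) : ℤ) :=
  cross_intersecting_refined_bound_general n a b j hab hj1 hj2 A B hA hB hcross hBlow hBhigh
end
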